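/- If v and w are functions in \(H^1\) of the unit disk whose boundary values satisfy \(\overline{v(z)} = z^{-N} w(z)\) a.e. on the unit circle for some nonnegative integer N, then v and w are both polynomials of degree at most N. -/

import Mathlib

open MeasureTheory Complex Filter Topology
open scoped Real ComplexConjugate

noncomputable section

instance : Fact (0 < 2 * π) := ⟨by positivity⟩

/-- Normalized arc length (Haar) measure on the circle `ℝ / 2πℤ`. -/
abbrev μT : Measure (AddCircle (2 * π)) := AddCircle.haarAddCircle

/-- The boundary point `e^{iθ}` corresponding to `θ ∈ ℝ / 2πℤ`. -/
def bpt (θ : AddCircle (2 * π)) : ℂ := fourier 1 θ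

/-- The Hardy space `H¹`, viewed as the subset of `L¹` of the circle consisting of
functions whose negative Fourier coefficients vanish. -/
def HardySet : Set (Lp ℂ 1 μT) :=
  {f | ∀ n : ℤ, n < 0 → fourierCoeff (⇑f) n = 0}

/-- A boundary function is inner if it lies in `H¹` (equivalently `H^∞`) and has
unimodular boundary values a.e. -/
def InnerFn (I : AddCircle (2 * π) → ℂ) : Prop :=
  Integrable I μT ∧ (∀ᵐ θ ∂μT, ‖I θ‖ = 1) ∧
    ∀ n : ℤ, n < 0 → fourierCoeff I n = 0

/-- A boundary function is outer if it lies in `H¹`, does not vanish at the origin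
(i.e. has nonzero mean), `log|F|` is integrable, and `log|F(0)| = ∫ log|F|`. -/
def OuterFn (F : AddCircle (2 * π) → ℂ) : Prop :=
  Integrable F μT ∧ (∀ n : ℤ, n < 0 → fourierCoeff F n = 0) ∧
    fourierCoeff F 0 ≠ 0 ∧
    Integrable (fun θ => Real.log ‖F θ‖) μT ∧
    Real.log ‖fourierCoeff F 0‖ = ∫ θ, Real.log ‖F θ‖ ∂μT

/-- The punctured Hardy space `H¹_K`: `H¹` functions whose Fourier coefficients
vanish on the finite set `K`. -/
def HardyKSet (K : Finset ℕ) : Set (Lp ℂ 1 μT) :=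
  {f | (∀ n : ℤ, n < 0 → fourierCoeff (⇑f) n = 0) ∧ ∀ k ∈ K, fourierCoeff (⇑f) (k : ℤ) = 0}

/-! Taking Fourier coefficients of `conj v = z^{-N} w` gives `conj (v̂ (-n)) = ŵ (n + N)`. As `v̂` and
`ŵ` vanish at negative indices, both vanish above `N`. An integrable function on the circle is
determined by its Fourier coefficients: trigonometric polynomials are uniformly dense in
`C(𝕋, ℂ)`, and integrals against continuous functions already detect the integrals over closed
sets. Hence `v` and `w` are polynomials in `z` of degree at most `N`. -/

open AddCircle Polynomial
open scoped BoundedContinuousFunction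

section ApproxClosed

variable {X E : Type*} [TopologicalSpace X] [MeasurableSpace X] [BorelSpace X]
  [NormedAddCommGroup E] [NormedSpace ℝ E] [CompleteSpace E]

theorem ae_eq_zero_of_forall_integral_nnreal_smul_eq_zero [HasOuterApproxClosed X]
    {μ : Measure X} {f : X → E} (hf : Integrable f μ)
    (h : ∀ g : X →ᵇ NNReal, ∫ x, (g x : ℝ) • f x ∂μ = 0) : f =ᵐ[μ] 0 := by
  refine ae_eq_zero_of_forall_setIntegral_isClosed_eq_zero hf fun F hF => ?_
  have hlim : Tendsto (fun n => ∫ x, (hF.apprSeq n x : ℝ) • f x ∂μ) atTop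
      (𝓝 (∫ x in F, f x ∂μ)) := by
    rw [← integral_indicator hF.measurableSet]
    refine tendsto_integral_of_dominated_convergence (‖f ·‖) (fun n => ?_) hf.norm
      (fun n => .of_forall fun x => ?_) (.of_forall fun x => ?_)
    · exact (NNReal.continuous_coe.comp (hF.apprSeq n).continuous).aestronglyMeasurable.smul hf.1
    · rw [norm_smul]
      exact mul_le_of_le_one_left (norm_nonneg _)
        (by simpa using HasOuterApproxClosed.apprSeq_apply_le_one hF n x)
    · have := ((NNReal.continuous_coe.tendsto _).comp
        (tendsto_pi_nhds.1 (HasOuterApproxClosed.tendsto_apprSeq hF) x)).smul_const (f x)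
      by_cases hx : x ∈ F <;> simpa [hx] using this
  simp_rw [h] at hlim
  exact (tendsto_nhds_unique tendsto_const_nhds hlim).symm

end ApproxClosed

section IntegralMul

variable {X : Type*} [TopologicalSpace X] [CompactSpace X] [MeasurableSpace X]
  [OpensMeasurableSpace X] {μ : Measure X} {f : X → ℂ}

theorem MeasureTheory.Integrable.continuousMap_mul (hf : Integrable f μ) (g : C(X, ℂ)) :
    Integrable (fun x => g x * f x) μ :=
  hf.bdd_mul g.continuous.aestronglyMeasurable (.of_forall g.norm_coe_le_norm)

def integralMulCLM (hf : Integrable f μ) : C(X, ℂ) →L[ℂ] ℂ :=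
  LinearMap.mkContinuous
    { toFun g := ∫ x, g x * f x ∂μ
      map_add' g₁ g₂ := by
        simp only [ContinuousMap.add_apply, add_mul]
        exact integral_add (hf.continuousMap_mul g₁) (hf.continuousMap_mul g₂)
      map_smul' c g := by
        simp only [ContinuousMap.smul_apply, smul_eq_mul, mul_assoc, RingHom.id_apply]
        exact integral_const_mul c _ }
    (∫ x, ‖f x‖ ∂μ) fun g => by
      calc ‖∫ x, g x * f x ∂μ‖ ≤ ∫ x, ‖g‖ * ‖f x‖ ∂μ :=
            norm_integral_le_of_norm_le (hf.norm.const_mul _) (.of_forall fun x => by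
              rw [norm_mul]; gcongr; exact g.norm_coe_le_norm x)
        _ = (∫ x, ‖f x‖ ∂μ) * ‖g‖ := by rw [integral_const_mul, mul_comm]

end IntegralMul

section Fourier

variable {T : ℝ}

theorem fourier_one_zpow (n : ℤ) (x : AddCircle T) : fourier 1 x ^ n = fourier n x := by
  rw [fourier_one, fourier_apply, toCircle_zsmul, Circle.coe_zpow]

variable [Fact (0 < T)]

theorem fourierCoeff_conj (f : AddCircle T → ℂ) (n : ℤ) :
    fourierCoeff (fun t => conj (f t)) n = conj (fourierCoeff f (-n)) := by
  simp only [fourierCoeff, smul_eq_mul, ← integral_conj, map_mul, ← fourier_neg, neg_neg]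

theorem fourierCoeff_fourier_mul (f : AddCircle T → ℂ) (m n : ℤ) :
    fourierCoeff (fun t => fourier m t * f t) n = fourierCoeff f (n - m) := by
  simp only [fourierCoeff, smul_eq_mul, ← mul_assoc, ← fourier_add, sub_eq_neg_add]
  ring_nf

theorem fourierCoeff_sub {f g : AddCircle T → ℂ} (hf : Integrable f haarAddCircle)
    (hg : Integrable g haarAddCircle) (n : ℤ) :
    fourierCoeff (f - g) n = fourierCoeff f n - fourierCoeff g n := by
  simp only [fourierCoeff, Pi.sub_apply, smul_sub]
  exact integral_sub (hf.continuousMap_mul (fourier (-n))) (hg.continuousMap_mul (fourier (-n)))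

theorem ae_eq_zero_of_fourierCoeff_eq_zero {f : AddCircle T → ℂ} (hf : Integrable f haarAddCircle)
    (h : ∀ n, fourierCoeff f n = 0) : f =ᵐ[haarAddCircle] 0 := by
  have hker : (Submodule.span ℂ (Set.range (fourier (T := T)))).topologicalClosure ≤
      LinearMap.ker (integralMulCLM hf).toLinearMap := by
    refine Submodule.topologicalClosure_minimal _ (Submodule.span_le.2 ?_)
      (integralMulCLM hf).isClosed_ker
    rintro - ⟨n, rfl⟩
    simpa [integralMulCLM, fourierCoeff] using h (-n)
  rw [span_fourier_closure_eq_top] at hker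
  refine ae_eq_zero_of_forall_integral_nnreal_smul_eq_zero hf fun g => ?_
  simp only [Complex.real_smul]
  exact hker (Submodule.mem_top (x := ⟨fun x => ((g x : ℝ) : ℂ), by fun_prop⟩))

theorem ae_eq_of_fourierCoeff_eq {f g : AddCircle T → ℂ} (hf : Integrable f haarAddCircle)
    (hg : Integrable g haarAddCircle) (h : fourierCoeff f = fourierCoeff g) :
    f =ᵐ[haarAddCircle] g := by
  filter_upwards [ae_eq_zero_of_fourierCoeff_eq_zero (hf.sub hg)
    fun n => by rw [fourierCoeff_sub hf hg, h, sub_self]] with x hx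
  exact sub_eq_zero.1 hx

end Fourier

theorem Polynomial.coe_toAddCircle (p : ℂ[X]) :
    ⇑p.toAddCircle = fun θ => p.eval (fourier 1 θ) := by
  ext θ
  simp [toAddCircle]

theorem exists_polynomial_ae_eq_of_fourierCoeff_eq_zero {u : AddCircle (2 * π) → ℂ}
    (hu : Integrable u haarAddCircle) {N : ℕ} (hneg : ∀ n : ℤ, n < 0 → fourierCoeff u n = 0)
    (hlarge : ∀ n : ℤ, (N : ℤ) < n → fourierCoeff u n = 0) :
    ∃ p : ℂ[X], p.natDegree ≤ N ∧ u =ᵐ[haarAddCircle] fun θ => p.eval (fourier 1 θ) := by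
  let p : ℂ[X] := ∑ k ∈ Finset.range (N + 1), monomial k (fourierCoeff u k)
  have hcoeff : fourierCoeff u = fourierCoeff p.toAddCircle := by
    ext n
    rcases lt_or_ge n 0 with hn | hn
    · simp [fourierCoeff_toAddCircle, hn, hneg]
    lift n to ℕ using hn
    simp only [p, fourierCoeff_toAddCircle_natCast, finsetSum_coeff, coeff_monomial,
      Finset.sum_ite_eq', Finset.mem_range]
    split_ifs with hN
    · rfl
    · exact hlarge n (by omega)
  refine ⟨p, natDegree_sum_le_of_forall_le _ _ fun k hk => ?_, ?_⟩
  · exact (natDegree_monomial_le _).trans (Nat.lt_succ_iff.1 (Finset.mem_range.1 hk))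
  · simpa only [coe_toAddCircle] using
      ae_eq_of_fourierCoeff_eq hu (toAddCircle.integrable p) hcoeff

/-- If `v, w ∈ H¹` have boundary values satisfying `conj v = z^{-N} w` a.e. on the
circle, then `v` and `w` are both polynomials of degree at most `N`. -/
theorem conj_eq_zpow_mul_implies_poly (N : ℕ) (v w : AddCircle (2 * π) → ℂ)
    (hv : Integrable v μT) (hw : Integrable w μT)
    (hvH : ∀ n : ℤ, n < 0 → fourierCoeff v n = 0)
    (hwH : ∀ n : ℤ, n < 0 → fourierCoeff w n = 0)
    (hbd : ∀ᵐ θ ∂μT, conj (v θ) = bpt θ ^ (-(N : ℤ)) * w θ) :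
    ∃ p q : Polynomial ℂ, p.natDegree ≤ N ∧ q.natDegree ≤ N ∧
      v =ᵐ[μT] (fun θ => p.eval (bpt θ)) ∧ w =ᵐ[μT] (fun θ => q.eval (bpt θ)) := by
  have hcoeff (n : ℤ) : conj (fourierCoeff v (-n)) = fourierCoeff w (n + N) := by
    have hae : (fun θ => conj (v θ)) =ᵐ[μT] fun θ => fourier (-(N : ℤ)) θ * w θ := by
      filter_upwards [hbd] with θ hθ
      rw [hθ, bpt, fourier_one_zpow]
    rw [← fourierCoeff_conj, fourierCoeff_congr_ae hae, fourierCoeff_fourier_mul, sub_neg_eq_add]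
  have hv_large (m : ℤ) (hm : (N : ℤ) < m) : fourierCoeff v m = 0 := by
    simpa [hwH (-m + N) (by omega)] using hcoeff (-m)
  have hw_large (m : ℤ) (hm : (N : ℤ) < m) : fourierCoeff w m = 0 := by
    simpa [hvH (N - m) (by omega)] using (hcoeff (m - N)).symm
  obtain ⟨p, hp, hvp⟩ := exists_polynomial_ae_eq_of_fourierCoeff_eq_zero hv hvH hv_large
  obtain ⟨q, hq, hwq⟩ := exists_polynomial_ae_eq_of_fourierCoeff_eq_zero hw hwH hw_large
  exact ⟨p, q, hp, hq, hvp, hwq⟩
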